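/- Homogenization of a parametric variational problem (third-order case): let L : ℝ × ℝ² × ℝ² × ℝ² → ℝ, (t, x, v, v′) ↦ L(t, x, v, v′), be smooth, and for a smooth curve y : ℝ → ℝ² define its Euler–Poisson expression E_a(y)(t) = (∂L/∂x^a)(t, y, y′, y″) − (d/dt)[(∂L/∂v^a)(t, y, y′, y″)] + (d²/dt²)[(∂L/∂v′^a)(t, y, y′, y″)] for a = 1, 2. Define the homogenized Lagrangian ℒ on triples (X, U, U̇) ∈ ℝ³ × ℝ³ × ℝ³ with U⁰ > 0 by ℒ(X, U, U̇) = U⁰ · L(X⁰, (X¹, X²), (U¹/U⁰, U²/U⁰), (U̇¹/(U⁰)² − U̇⁰U¹/(U⁰)³, U̇²/(U⁰)² − U̇⁰U²/(U⁰)³)), and for a smooth curve X : ℝ → ℝ³ with (X⁰)′ > 0 define 𝓔_ρ(X)(ζ) = (∂ℒ/∂X^ρ)(X, X′, X″) − (d/dζ)[(∂ℒ/∂U^ρ)(X, X′, X″)] + (d²/dζ²)[(∂ℒ/∂U̇^ρ)(X, X′, X″)] for ρ = 0, 1, 2. Then, writing y = (X¹, X²) ∘ (X⁰)⁻¹ for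 the reparametrization of the curve by t = X⁰(ζ), one has for a = 1, 2 and all ζ: 𝓔_a(X)(ζ) = (X⁰)′(ζ) · E_a(y)(X⁰(ζ)), and 𝓔₀(X)(ζ) = −(X¹)′(ζ)·E₁(y)(X⁰(ζ)) − (X²)′(ζ)·E₂(y)(X⁰(ζ)). -/

import Mathlib

noncomputable section


/-- Partial derivative of a second-order Lagrangian L(t, x, v, v′) on ℝ × ℝ² × ℝ² × ℝ²
with respect to the component x^a of the position slot. -/
def pdX2 (L : ℝ × (Fin 2 → ℝ) × (Fin 2 → ℝ) × (Fin 2 → ℝ) → ℝ) (a : Fin 2)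
    (p : ℝ × (Fin 2 → ℝ) × (Fin 2 → ℝ) × (Fin 2 → ℝ)) : ℝ :=
  fderiv ℝ (fun w => L (p.1, w, p.2.2.1, p.2.2.2)) p.2.1 (Pi.single a 1)

/-- Partial derivative with respect to the component v^a of the velocity slot. -/
def pdV2 (L : ℝ × (Fin 2 → ℝ) × (Fin 2 → ℝ) × (Fin 2 → ℝ) → ℝ) (a : Fin 2)
    (p : ℝ × (Fin 2 → ℝ) × (Fin 2 → ℝ) × (Fin 2 → ℝ)) : ℝ :=
  fderiv ℝ (fun w => L (p.1, p.2.1, w, p.2.2.2)) p.2.2.1 (Pi.single a 1)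

/-- Partial derivative with respect to the component v′^a of the acceleration slot. -/
def pdA2 (L : ℝ × (Fin 2 → ℝ) × (Fin 2 → ℝ) × (Fin 2 → ℝ) → ℝ) (a : Fin 2)
    (p : ℝ × (Fin 2 → ℝ) × (Fin 2 → ℝ) × (Fin 2 → ℝ)) : ℝ :=
  fderiv ℝ (fun w => L (p.1, p.2.1, p.2.2.1, w)) p.2.2.2 (Pi.single a 1)

/-- The Euler–Poisson expression of L along a curve y : ℝ → ℝ²:
E_a(y)(t) = ∂L/∂x^a − (d/dt)[∂L/∂v^a] + (d²/dt²)[∂L/∂v′^a], evaluated on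
(t, y(t), y′(t), y″(t)). -/
def EP2 (L : ℝ × (Fin 2 → ℝ) × (Fin 2 → ℝ) × (Fin 2 → ℝ) → ℝ)
    (y : ℝ → Fin 2 → ℝ) (a : Fin 2) (t : ℝ) : ℝ :=
  pdX2 L a (t, y t, deriv y t, deriv (deriv y) t)
    - deriv (fun s => pdV2 L a (s, y s, deriv y s, deriv (deriv y) s)) t
    + deriv (deriv (fun s => pdA2 L a (s, y s, deriv y s, deriv (deriv y) s))) t

/-- The homogenized (parametric) Lagrangian
ℒ(X, U, U̇) = U⁰ · L(X⁰, (X¹, X²), (U¹/U⁰, U²/U⁰),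
(U̇¹/(U⁰)² − U̇⁰U¹/(U⁰)³, U̇²/(U⁰)² − U̇⁰U²/(U⁰)³)). -/
def homog (L : ℝ × (Fin 2 → ℝ) × (Fin 2 → ℝ) × (Fin 2 → ℝ) → ℝ)
    (p : (Fin 3 → ℝ) × (Fin 3 → ℝ) × (Fin 3 → ℝ)) : ℝ :=
  p.2.1 0 * L (p.1 0, ![p.1 1, p.1 2],
    ![p.2.1 1 / p.2.1 0, p.2.1 2 / p.2.1 0],
    ![p.2.2 1 / (p.2.1 0) ^ 2 - p.2.2 0 * p.2.1 1 / (p.2.1 0) ^ 3,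
      p.2.2 2 / (p.2.1 0) ^ 2 - p.2.2 0 * p.2.1 2 / (p.2.1 0) ^ 3])

/-- Partial derivative of an autonomous Lagrangian ℒ(X, U, U̇) on ℝ³ × ℝ³ × ℝ³
with respect to the component X^ρ. -/
def pdX3 (M : (Fin 3 → ℝ) × (Fin 3 → ℝ) × (Fin 3 → ℝ) → ℝ) (ρ : Fin 3)
    (p : (Fin 3 → ℝ) × (Fin 3 → ℝ) × (Fin 3 → ℝ)) : ℝ :=
  fderiv ℝ (fun w => M (w, p.2.1, p.2.2)) p.1 (Pi.single ρ 1)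

/-- Partial derivative with respect to the component U^ρ. -/
def pdU3 (M : (Fin 3 → ℝ) × (Fin 3 → ℝ) × (Fin 3 → ℝ) → ℝ) (ρ : Fin 3)
    (p : (Fin 3 → ℝ) × (Fin 3 → ℝ) × (Fin 3 → ℝ)) : ℝ :=
  fderiv ℝ (fun w => M (p.1, w, p.2.2)) p.2.1 (Pi.single ρ 1)

/-- Partial derivative with respect to the component U̇^ρ. -/
def pdA3 (M : (Fin 3 → ℝ) × (Fin 3 → ℝ) × (Fin 3 → ℝ) → ℝ) (ρ : Fin 3)
    (p : (Fin 3 → ℝ) × (Fin 3 → ℝ) × (Fin 3 → ℝ)) : ℝ :=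
  fderiv ℝ (fun w => M (p.1, p.2.1, w)) p.2.2 (Pi.single ρ 1)

/-- The Euler–Poisson expression of ℒ along a curve X : ℝ → ℝ³:
𝓔_ρ(X)(ζ) = ∂ℒ/∂X^ρ − (d/dζ)[∂ℒ/∂U^ρ] + (d²/dζ²)[∂ℒ/∂U̇^ρ], evaluated on
(X(ζ), X′(ζ), X″(ζ)). -/
def EP3 (M : (Fin 3 → ℝ) × (Fin 3 → ℝ) × (Fin 3 → ℝ) → ℝ)
    (X : ℝ → Fin 3 → ℝ) (ρ : Fin 3) (ζ : ℝ) : ℝ :=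
  pdX3 M ρ (X ζ, deriv X ζ, deriv (deriv X) ζ)
    - deriv (fun s => pdU3 M ρ (X s, deriv X s, deriv (deriv X) s)) ζ
    + deriv (deriv (fun s => pdA3 M ρ (X s, deriv X s, deriv (deriv X) s))) ζ



open scoped ContDiff


abbrev E2 : Type := ℝ × (Fin 2 → ℝ) × (Fin 2 → ℝ) × (Fin 2 → ℝ)
abbrev E3 : Type := (Fin 3 → ℝ) × (Fin 3 → ℝ) × (Fin 3 → ℝ)

/-- directional derivative as 1-D derivative along a line -/
lemma fderiv_apply_eq_deriv {E : Type*} [NormedAddCommGroup E] [NormedSpace ℝ E]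
    {M : E → ℝ} {x : E} (hM : DifferentiableAt ℝ M x) (v : E) :
    fderiv ℝ M x v = deriv (fun s : ℝ => M (x + s • v)) 0 := by
  have hline : HasDerivAt (fun s : ℝ => x + s • v) v 0 := by
    simpa using ((hasDerivAt_id (0:ℝ)).smul_const v).const_add x
  have hM' : HasFDerivAt M (fderiv ℝ M x) ((0:ℝ) • v + x) := by simpa using hM.hasFDerivAt
  have h : HasDerivAt (fun s : ℝ => M (x + s • v)) (fderiv ℝ M x v) 0 := by
    have hline' : HasDerivAt (fun s : ℝ => s • v + x) v 0 := by
      simpa using ((hasDerivAt_id (0:ℝ)).smul_const v).add_const x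
    have := hM'.comp_hasDerivAt 0 hline'
    simp only [Function.comp_def] at this
    simpa [add_comm] using this
  exact h.deriv.symm

/-- reparametrization of deriv -/
lemma deriv_reparam {E : Type*} [NormedAddCommGroup E] [NormedSpace ℝ E]
    {G : ℝ → E} {σ : ℝ → ℝ} {ζ : ℝ} (hG : DifferentiableAt ℝ G (σ ζ))
    (hσ : DifferentiableAt ℝ σ ζ) (hne : deriv σ ζ ≠ 0) :
    deriv G (σ ζ) = (deriv σ ζ)⁻¹ • deriv (fun z => G (σ z)) ζ := by
  have h : HasDerivAt (fun z => G (σ z)) (deriv σ ζ • deriv G (σ ζ)) ζ :=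
    (hG.hasDerivAt.scomp ζ hσ.hasDerivAt)
  rw [h.deriv, smul_smul, inv_mul_cancel₀ hne, one_smul]

lemma hasDerivAt_fin2 {f g : ℝ → ℝ} {f' g' x : ℝ} (hf : HasDerivAt f f' x)
    (hg : HasDerivAt g g' x) : HasDerivAt (fun t => ![f t, g t]) ![f', g'] x := by
  rw [hasDerivAt_pi]
  rw [Fin.forall_fin_two]
  constructor <;> simp [hf, hg]

lemma contDiff_fin2 {α : Type*} [NormedAddCommGroup α] [NormedSpace ℝ α]
    {f g : α → ℝ} (hf : ContDiff ℝ ∞ f) (hg : ContDiff ℝ ∞ g) :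
    ContDiff ℝ ∞ (fun x => ![f x, g x]) := by
  apply contDiff_pi.2
  rw [Fin.forall_fin_two]
  constructor <;> simp [hf, hg]

lemma deriv_component {n : ℕ} (X : ℝ → Fin n → ℝ) (ζ : ℝ)
    (h : DifferentiableAt ℝ X ζ) (i : Fin n) :
    deriv X ζ i = deriv (fun t => X t i) ζ := by
  exact ((hasDerivAt_pi.mp h.hasDerivAt i).deriv).symm


/-! ### Partial derivative lemmas (E2) -/

def pdT2 (L : E2 → ℝ) (p : E2) : ℝ := fderiv ℝ L p (1, 0, 0, 0)

variable {L : E2 → ℝ}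

lemma sec2X_diff (hL : Differentiable ℝ L) (p : E2) :
    DifferentiableAt ℝ (fun w => L (p.1, w, p.2.2.1, p.2.2.2)) p.2.1 :=
  (hL _).comp _ (by fun_prop)

lemma sec2V_diff (hL : Differentiable ℝ L) (p : E2) :
    DifferentiableAt ℝ (fun w => L (p.1, p.2.1, w, p.2.2.2)) p.2.2.1 :=
  (hL _).comp _ (by fun_prop)

lemma sec2A_diff (hL : Differentiable ℝ L) (p : E2) :
    DifferentiableAt ℝ (fun w => L (p.1, p.2.1, p.2.2.1, w)) p.2.2.2 :=
  (hL _).comp _ (by fun_prop)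

lemma pdX2_eq (hL : Differentiable ℝ L) (a : Fin 2) (p : E2) :
    pdX2 L a p = fderiv ℝ L p (0, Pi.single a 1, 0, 0) := by
  rw [pdX2, fderiv_apply_eq_deriv (sec2X_diff hL p), fderiv_apply_eq_deriv (hL p)]
  congr 1; funext s; congr 1
  simp [Prod.ext_iff]

lemma pdV2_eq (hL : Differentiable ℝ L) (a : Fin 2) (p : E2) :
    pdV2 L a p = fderiv ℝ L p (0, 0, Pi.single a 1, 0) := by
  rw [pdV2, fderiv_apply_eq_deriv (sec2V_diff hL p), fderiv_apply_eq_deriv (hL p)]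
  congr 1; funext s; congr 1
  simp [Prod.ext_iff]

lemma pdA2_eq (hL : Differentiable ℝ L) (a : Fin 2) (p : E2) :
    pdA2 L a p = fderiv ℝ L p (0, 0, 0, Pi.single a 1) := by
  rw [pdA2, fderiv_apply_eq_deriv (sec2A_diff hL p), fderiv_apply_eq_deriv (hL p)]
  congr 1; funext s; congr 1
  simp [Prod.ext_iff]

lemma fin2_decomp (b : Fin 2 → ℝ) :
    b = b 0 • (Pi.single 0 1 : Fin 2 → ℝ) + b 1 • (Pi.single 1 1 : Fin 2 → ℝ) := by
  funext i
  fin_cases i <;> simp [Pi.single_apply]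

/-- total decomposition of the fderiv of L applied to a vector -/
lemma fderiv_L_apply (hL : Differentiable ℝ L) (p : E2) (t : ℝ) (b c d : Fin 2 → ℝ) :
    fderiv ℝ L p (t, b, c, d)
      = t * pdT2 L p + (b 0 * pdX2 L 0 p + b 1 * pdX2 L 1 p)
        + (c 0 * pdV2 L 0 p + c 1 * pdV2 L 1 p)
        + (d 0 * pdA2 L 0 p + d 1 * pdA2 L 1 p) := by
  have e0 : Fin 2 → ℝ := 0
  have hsplit : ((t, b, c, d) : E2)
      = (t, 0, 0, 0) + (0, b, 0, 0) + (0, 0, c, 0) + (0, 0, 0, d) := by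
    simp [Prod.ext_iff]
  have h1 : ((t, 0, 0, 0) : E2) = t • ((1:ℝ), (0:Fin 2 → ℝ), (0:Fin 2 → ℝ), (0:Fin 2 → ℝ)) := by
    simp [Prod.ext_iff]
  have h2 : ((0, b, 0, 0) : E2)
      = b 0 • ((0:ℝ), (Pi.single 0 1 : Fin 2 → ℝ), (0:Fin 2 → ℝ), (0:Fin 2 → ℝ))
        + b 1 • ((0:ℝ), (Pi.single 1 1 : Fin 2 → ℝ), (0:Fin 2 → ℝ), (0:Fin 2 → ℝ)) := by
    simp [Prod.ext_iff]
    exact fin2_decomp b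
  have h3 : ((0, 0, c, 0) : E2)
      = c 0 • ((0:ℝ), (0:Fin 2 → ℝ), (Pi.single 0 1 : Fin 2 → ℝ), (0:Fin 2 → ℝ))
        + c 1 • ((0:ℝ), (0:Fin 2 → ℝ), (Pi.single 1 1 : Fin 2 → ℝ), (0:Fin 2 → ℝ)) := by
    simp [Prod.ext_iff]
    exact fin2_decomp c
  have h4 : ((0, 0, 0, d) : E2)
      = d 0 • ((0:ℝ), (0:Fin 2 → ℝ), (0:Fin 2 → ℝ), (Pi.single 0 1 : Fin 2 → ℝ))
        + d 1 • ((0:ℝ), (0:Fin 2 → ℝ), (0:Fin 2 → ℝ), (Pi.single 1 1 : Fin 2 → ℝ)) := by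
    simp [Prod.ext_iff]
    exact fin2_decomp d
  rw [hsplit, map_add, map_add, map_add, h1, h2, h3, h4, map_add, map_add, map_add,
    map_smul, map_smul, map_smul, map_smul, map_smul, map_smul, map_smul]
  rw [pdT2, pdX2_eq hL 0 p, pdX2_eq hL 1 p, pdV2_eq hL 0 p, pdV2_eq hL 1 p,
    pdA2_eq hL 0 p, pdA2_eq hL 1 p]
  simp [smul_eq_mul]

lemma one_le_inf : (∞ : WithTop ℕ∞) ≠ 0 := by
  simp

lemma pdV2_contDiff (hL : ContDiff ℝ ∞ L) (a : Fin 2) : ContDiff ℝ ∞ (pdV2 L a) := by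
  have : pdV2 L a = fun p => fderiv ℝ L p (0, 0, Pi.single a 1, 0) := by
    funext p; exact pdV2_eq (hL.differentiable one_le_inf) a p
  rw [this]
  exact (hL.fderiv_right (by simp)).clm_apply contDiff_const

lemma pdA2_contDiff (hL : ContDiff ℝ ∞ L) (a : Fin 2) : ContDiff ℝ ∞ (pdA2 L a) := by
  have : pdA2 L a = fun p => fderiv ℝ L p (0, 0, 0, Pi.single a 1) := by
    funext p; exact pdA2_eq (hL.differentiable one_le_inf) a p
  rw [this]
  exact (hL.fderiv_right (by simp)).clm_apply contDiff_const

/-! ### E3 partial derivatives as one-dimensional derivatives -/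

lemma pdX3_deriv {M : E3 → ℝ} {p : E3} (ρ : Fin 3)
    (h : DifferentiableAt ℝ (fun w => M (w, p.2.1, p.2.2)) p.1) :
    pdX3 M ρ p = deriv (fun s : ℝ => M (p.1 + s • (Pi.single ρ 1 : Fin 3 → ℝ), p.2.1, p.2.2)) 0 :=
  fderiv_apply_eq_deriv h _

lemma pdU3_deriv {M : E3 → ℝ} {p : E3} (ρ : Fin 3)
    (h : DifferentiableAt ℝ (fun w => M (p.1, w, p.2.2)) p.2.1) :
    pdU3 M ρ p = deriv (fun s : ℝ => M (p.1, p.2.1 + s • (Pi.single ρ 1 : Fin 3 → ℝ), p.2.2)) 0 :=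
  fderiv_apply_eq_deriv h _

lemma pdA3_deriv {M : E3 → ℝ} {p : E3} (ρ : Fin 3)
    (h : DifferentiableAt ℝ (fun w => M (p.1, p.2.1, w)) p.2.2) :
    pdA3 M ρ p = deriv (fun s : ℝ => M (p.1, p.2.1, p.2.2 + s • (Pi.single ρ 1 : Fin 3 → ℝ))) 0 :=
  fderiv_apply_eq_deriv h _

@[fun_prop]
lemma DifferentiableAt.fin2' {α : Type*} [NormedAddCommGroup α] [NormedSpace ℝ α]
    {f g : α → ℝ} {x : α} (hf : DifferentiableAt ℝ f x) (hg : DifferentiableAt ℝ g x) :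
    DifferentiableAt ℝ (fun x => ![f x, g x]) x := by
  apply differentiableAt_pi.2
  rw [Fin.forall_fin_two]
  constructor <;> simp [hf, hg]

lemma homog_secX_diff (hL : Differentiable ℝ L) (A U B : Fin 3 → ℝ) :
    DifferentiableAt ℝ (fun w => homog L (w, U, B)) A := by
  simp only [homog]
  fun_prop

lemma homog_secU_diff (hL : Differentiable ℝ L) (A U B : Fin 3 → ℝ) (h0 : U 0 ≠ 0) :
    DifferentiableAt ℝ (fun w => homog L (A, w, B)) U := by
  simp only [homog, div_eq_mul_inv]
  fun_prop (disch := first | assumption | exact pow_ne_zero _ h0)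

lemma homog_secA_diff (hL : Differentiable ℝ L) (A U B : Fin 3 → ℝ) (h0 : U 0 ≠ 0) :
    DifferentiableAt ℝ (fun w => homog L (A, U, w)) B := by
  simp only [homog]
  fun_prop (disch := first | assumption | exact pow_ne_zero _ h0)

/-! ### Curve-level definitions -/

def d1 (X : ℝ → Fin 3 → ℝ) (i : Fin 3) : ℝ → ℝ := fun ζ => deriv (fun t => X t i) ζ
def d2 (X : ℝ → Fin 3 → ℝ) (i : Fin 3) : ℝ → ℝ := fun ζ => deriv (d1 X i) ζ

def Fc (X : ℝ → Fin 3 → ℝ) : ℝ → E2 := fun ζ =>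
  (X ζ 0, ![X ζ 1, X ζ 2],
   ![d1 X 1 ζ / d1 X 0 ζ, d1 X 2 ζ / d1 X 0 ζ],
   ![d2 X 1 ζ / d1 X 0 ζ ^ 2 - d2 X 0 ζ * d1 X 1 ζ / d1 X 0 ζ ^ 3,
     d2 X 2 ζ / d1 X 0 ζ ^ 2 - d2 X 0 ζ * d1 X 2 ζ / d1 X 0 ζ ^ 3])

variable {X : ℝ → Fin 3 → ℝ}

lemma comp_contDiff (hX : ContDiff ℝ ∞ X) (i : Fin 3) :
    ContDiff ℝ ∞ (fun t => X t i) := (contDiff_apply ℝ ℝ i).comp hX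

lemma d1_contDiff (hX : ContDiff ℝ ∞ X) (i : Fin 3) : ContDiff ℝ ∞ (d1 X i) :=
  (contDiff_infty_iff_deriv.mp (comp_contDiff hX i)).2

lemma d2_contDiff (hX : ContDiff ℝ ∞ X) (i : Fin 3) : ContDiff ℝ ∞ (d2 X i) :=
  (contDiff_infty_iff_deriv.mp (d1_contDiff hX i)).2

lemma hc1 (hX : ContDiff ℝ ∞ X) (ζ : ℝ) (i : Fin 3) : deriv X ζ i = d1 X i ζ :=
  deriv_component X ζ ((hX.differentiable one_le_inf) ζ) i

lemma derivX_eq (hX : ContDiff ℝ ∞ X) : deriv X = fun ζ i => d1 X i ζ := by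
  funext ζ i; exact hc1 hX ζ i

lemma derivX_contDiff (hX : ContDiff ℝ ∞ X) : ContDiff ℝ ∞ (deriv X) := by
  rw [derivX_eq hX]
  exact contDiff_pi.2 fun i => d1_contDiff hX i

lemma hc2 (hX : ContDiff ℝ ∞ X) (ζ : ℝ) (i : Fin 3) : deriv (deriv X) ζ i = d2 X i ζ := by
  rw [deriv_component (deriv X) ζ ((derivX_contDiff hX).differentiable one_le_inf ζ) i]
  rw [d2]
  congr 1
  funext z
  exact hc1 hX z i

lemma Fc_contDiff (hX : ContDiff ℝ ∞ X) (hpos : ∀ ζ, d1 X 0 ζ ≠ 0) :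
    ContDiff ℝ ∞ (Fc X) := by
  unfold Fc
  refine ContDiff.prodMk (comp_contDiff hX 0) (ContDiff.prodMk ?_ (ContDiff.prodMk ?_ ?_))
  · exact contDiff_fin2 (comp_contDiff hX 1) (comp_contDiff hX 2)
  · exact contDiff_fin2 ((d1_contDiff hX 1).div (d1_contDiff hX 0) hpos)
      ((d1_contDiff hX 2).div (d1_contDiff hX 0) hpos)
  · refine contDiff_fin2 (ContDiff.sub ?_ ?_) (ContDiff.sub ?_ ?_)
    · exact (d2_contDiff hX 1).div ((d1_contDiff hX 0).pow 2) fun ζ => pow_ne_zero _ (hpos ζ)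
    · exact ((d2_contDiff hX 0).mul (d1_contDiff hX 1)).div ((d1_contDiff hX 0).pow 3)
        fun ζ => pow_ne_zero _ (hpos ζ)
    · exact (d2_contDiff hX 2).div ((d1_contDiff hX 0).pow 2) fun ζ => pow_ne_zero _ (hpos ζ)
    · exact ((d2_contDiff hX 0).mul (d1_contDiff hX 2)).div ((d1_contDiff hX 0).pow 3)
        fun ζ => pow_ne_zero _ (hpos ζ)

/-! ### Partials of the homogenized Lagrangian along the curve -/

lemma hasDerivAt_L_comp {c : ℝ → E2} {c' : E2} {s : ℝ} (hL : Differentiable ℝ L)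
    (hc : HasDerivAt c c' s) :
    HasDerivAt (fun z => L (c z)) (fderiv ℝ L (c s) c') s :=
  (hL (c s)).hasFDerivAt.comp_hasDerivAt s hc

lemma pdX3_deriv' {M : E3 → ℝ} (A U B : Fin 3 → ℝ) (ρ : Fin 3)
    (h : DifferentiableAt ℝ (fun w => M (w, U, B)) A) :
    pdX3 M ρ (A, U, B) = deriv (fun s : ℝ => M (A + s • (Pi.single ρ 1 : Fin 3 → ℝ), U, B)) 0 :=
  fderiv_apply_eq_deriv h _

lemma pdU3_deriv' {M : E3 → ℝ} (A U B : Fin 3 → ℝ) (ρ : Fin 3)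
    (h : DifferentiableAt ℝ (fun w => M (A, w, B)) U) :
    pdU3 M ρ (A, U, B) = deriv (fun s : ℝ => M (A, U + s • (Pi.single ρ 1 : Fin 3 → ℝ), B)) 0 :=
  fderiv_apply_eq_deriv h _

lemma pdA3_deriv' {M : E3 → ℝ} (A U B : Fin 3 → ℝ) (ρ : Fin 3)
    (h : DifferentiableAt ℝ (fun w => M (A, U, w)) B) :
    pdA3 M ρ (A, U, B) = deriv (fun s : ℝ => M (A, U, B + s • (Pi.single ρ 1 : Fin 3 → ℝ))) 0 :=
  fderiv_apply_eq_deriv h _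

lemma pdX3_zero (hL : Differentiable ℝ L) (hX : ContDiff ℝ ∞ X) (ζ : ℝ) :
    pdX3 (homog L) 0 (X ζ, deriv X ζ, deriv (deriv X) ζ)
      = d1 X 0 ζ * pdT2 L (Fc X ζ) := by
  rw [pdX3_deriv' _ _ _ 0 (homog_secX_diff hL _ _ _)]
  have hfun : (fun s : ℝ => homog L (X ζ + s • (Pi.single 0 1 : Fin 3 → ℝ),
        deriv X ζ, deriv (deriv X) ζ))
      = fun s : ℝ => d1 X 0 ζ *
          L (X ζ 0 + s, ![X ζ 1, X ζ 2], (Fc X ζ).2.2.1, (Fc X ζ).2.2.2) := by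
    funext s
    simp [homog, Pi.single_apply, Fc, hc1 hX, hc2 hX]
  rw [hfun]
  have hcurve : HasDerivAt (fun s : ℝ =>
      ((X ζ 0 + s, ![X ζ 1, X ζ 2], (Fc X ζ).2.2.1, (Fc X ζ).2.2.2) : E2))
      ((1 : ℝ), 0, 0, 0) 0 := by
    refine HasDerivAt.prodMk ?_ (HasDerivAt.prodMk (hasDerivAt_const _ _)
      (HasDerivAt.prodMk (hasDerivAt_const _ _) (hasDerivAt_const _ _)))
    simpa using (hasDerivAt_id (0:ℝ)).const_add (X ζ 0)
  rw [((hasDerivAt_L_comp hL hcurve).const_mul (d1 X 0 ζ)).deriv]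
  congr 2
  simp [Fc, Prod.ext_iff]

lemma pdX3_one (hL : Differentiable ℝ L) (hX : ContDiff ℝ ∞ X) (ζ : ℝ) :
    pdX3 (homog L) 1 (X ζ, deriv X ζ, deriv (deriv X) ζ)
      = d1 X 0 ζ * pdX2 L 0 (Fc X ζ) := by
  rw [pdX3_deriv' _ _ _ 1 (homog_secX_diff hL _ _ _)]
  have hfun : (fun s : ℝ => homog L (X ζ + s • (Pi.single 1 1 : Fin 3 → ℝ),
        deriv X ζ, deriv (deriv X) ζ))
      = fun s : ℝ => d1 X 0 ζ *
          L (X ζ 0, ![X ζ 1 + s, X ζ 2], (Fc X ζ).2.2.1, (Fc X ζ).2.2.2) := by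
    funext s
    simp [homog, Pi.single_apply, Fc, hc1 hX, hc2 hX]
  rw [hfun]
  have hcurve : HasDerivAt (fun s : ℝ =>
      ((X ζ 0, ![X ζ 1 + s, X ζ 2], (Fc X ζ).2.2.1, (Fc X ζ).2.2.2) : E2))
      ((0 : ℝ), ![1, 0], 0, 0) 0 := by
    refine HasDerivAt.prodMk (hasDerivAt_const _ _) (HasDerivAt.prodMk ?_
      (HasDerivAt.prodMk (hasDerivAt_const _ _) (hasDerivAt_const _ _)))
    exact hasDerivAt_fin2 (by simpa using (hasDerivAt_id (0:ℝ)).const_add (X ζ 1))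
      (hasDerivAt_const _ _)
  rw [((hasDerivAt_L_comp hL hcurve).const_mul (d1 X 0 ζ)).deriv]
  have hpt : ((X ζ 0, ![X ζ 1 + 0, X ζ 2], (Fc X ζ).2.2.1, (Fc X ζ).2.2.2) : E2) = Fc X ζ := by
    simp [Fc, Prod.ext_iff]
  rw [hpt, fderiv_L_apply hL]
  simp

lemma pdX3_two (hL : Differentiable ℝ L) (hX : ContDiff ℝ ∞ X) (ζ : ℝ) :
    pdX3 (homog L) 2 (X ζ, deriv X ζ, deriv (deriv X) ζ)
      = d1 X 0 ζ * pdX2 L 1 (Fc X ζ) := by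
  rw [pdX3_deriv' _ _ _ 2 (homog_secX_diff hL _ _ _)]
  have hfun : (fun s : ℝ => homog L (X ζ + s • (Pi.single 2 1 : Fin 3 → ℝ),
        deriv X ζ, deriv (deriv X) ζ))
      = fun s : ℝ => d1 X 0 ζ *
          L (X ζ 0, ![X ζ 1, X ζ 2 + s], (Fc X ζ).2.2.1, (Fc X ζ).2.2.2) := by
    funext s
    simp [homog, Pi.single_apply, Fc, hc1 hX, hc2 hX]
  rw [hfun]
  have hcurve : HasDerivAt (fun s : ℝ =>
      ((X ζ 0, ![X ζ 1, X ζ 2 + s], (Fc X ζ).2.2.1, (Fc X ζ).2.2.2) : E2))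
      ((0 : ℝ), ![0, 1], 0, 0) 0 := by
    refine HasDerivAt.prodMk (hasDerivAt_const _ _) (HasDerivAt.prodMk ?_
      (HasDerivAt.prodMk (hasDerivAt_const _ _) (hasDerivAt_const _ _)))
    exact hasDerivAt_fin2 (hasDerivAt_const _ _)
      (by simpa using (hasDerivAt_id (0:ℝ)).const_add (X ζ 2))
  rw [((hasDerivAt_L_comp hL hcurve).const_mul (d1 X 0 ζ)).deriv]
  have hpt : ((X ζ 0, ![X ζ 1, X ζ 2 + 0], (Fc X ζ).2.2.1, (Fc X ζ).2.2.2) : E2) = Fc X ζ := by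
    simp [Fc, Prod.ext_iff]
  rw [hpt, fderiv_L_apply hL]
  simp

lemma pdA3_zero (hL : Differentiable ℝ L) (hX : ContDiff ℝ ∞ X) (ζ : ℝ)
    (hne : d1 X 0 ζ ≠ 0) :
    pdA3 (homog L) 0 (X ζ, deriv X ζ, deriv (deriv X) ζ)
      = -(d1 X 1 ζ / d1 X 0 ζ ^ 2 * pdA2 L 0 (Fc X ζ))
        - d1 X 2 ζ / d1 X 0 ζ ^ 2 * pdA2 L 1 (Fc X ζ) := by
  have h0 : deriv X ζ 0 ≠ 0 := by rw [hc1 hX]; exact hne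
  rw [pdA3_deriv' _ _ _ 0 (homog_secA_diff hL _ _ _ h0)]
  have hfun : (fun s : ℝ => homog L (X ζ, deriv X ζ,
        deriv (deriv X) ζ + s • (Pi.single 0 1 : Fin 3 → ℝ)))
      = fun s : ℝ => d1 X 0 ζ *
          L ((Fc X ζ).1, (Fc X ζ).2.1, (Fc X ζ).2.2.1,
            ![d2 X 1 ζ / d1 X 0 ζ ^ 2 - (d2 X 0 ζ + s) * d1 X 1 ζ / d1 X 0 ζ ^ 3,
              d2 X 2 ζ / d1 X 0 ζ ^ 2 - (d2 X 0 ζ + s) * d1 X 2 ζ / d1 X 0 ζ ^ 3]) := by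
    funext s
    simp [homog, Pi.single_apply, Fc, hc1 hX, hc2 hX]
  rw [hfun]
  have hcomp1 : HasDerivAt (fun s : ℝ =>
      d2 X 1 ζ / d1 X 0 ζ ^ 2 - (d2 X 0 ζ + s) * d1 X 1 ζ / d1 X 0 ζ ^ 3)
      (-(d1 X 1 ζ / d1 X 0 ζ ^ 3)) 0 := by
    have h := (hasDerivAt_const (0:ℝ) (d2 X 1 ζ / d1 X 0 ζ ^ 2)).sub
      ((((hasDerivAt_id (0:ℝ)).const_add (d2 X 0 ζ)).mul_const (d1 X 1 ζ)).div_const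
        (d1 X 0 ζ ^ 3))
    exact h.congr_deriv (by ring)
  have hcomp2 : HasDerivAt (fun s : ℝ =>
      d2 X 2 ζ / d1 X 0 ζ ^ 2 - (d2 X 0 ζ + s) * d1 X 2 ζ / d1 X 0 ζ ^ 3)
      (-(d1 X 2 ζ / d1 X 0 ζ ^ 3)) 0 := by
    have h := (hasDerivAt_const (0:ℝ) (d2 X 2 ζ / d1 X 0 ζ ^ 2)).sub
      ((((hasDerivAt_id (0:ℝ)).const_add (d2 X 0 ζ)).mul_const (d1 X 2 ζ)).div_const
        (d1 X 0 ζ ^ 3))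
    exact h.congr_deriv (by ring)
  have hcurve : HasDerivAt (fun s : ℝ =>
      (((Fc X ζ).1, (Fc X ζ).2.1, (Fc X ζ).2.2.1,
        ![d2 X 1 ζ / d1 X 0 ζ ^ 2 - (d2 X 0 ζ + s) * d1 X 1 ζ / d1 X 0 ζ ^ 3,
          d2 X 2 ζ / d1 X 0 ζ ^ 2 - (d2 X 0 ζ + s) * d1 X 2 ζ / d1 X 0 ζ ^ 3]) : E2))
      ((0:ℝ), 0, 0, ![-(d1 X 1 ζ / d1 X 0 ζ ^ 3), -(d1 X 2 ζ / d1 X 0 ζ ^ 3)]) 0 := by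
    exact (hasDerivAt_const _ _).prodMk ((hasDerivAt_const _ _).prodMk
      ((hasDerivAt_const _ _).prodMk (hasDerivAt_fin2 hcomp1 hcomp2)))
  rw [((hasDerivAt_L_comp hL hcurve).const_mul (d1 X 0 ζ)).deriv]
  have hpt : (((Fc X ζ).1, (Fc X ζ).2.1, (Fc X ζ).2.2.1,
      ![d2 X 1 ζ / d1 X 0 ζ ^ 2 - (d2 X 0 ζ + 0) * d1 X 1 ζ / d1 X 0 ζ ^ 3,
        d2 X 2 ζ / d1 X 0 ζ ^ 2 - (d2 X 0 ζ + 0) * d1 X 2 ζ / d1 X 0 ζ ^ 3]) : E2)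
      = Fc X ζ := by
    simp only [Prod.ext_iff, Fc, add_zero]
  rw [hpt, fderiv_L_apply hL]
  simp only [Matrix.cons_val_zero, Matrix.cons_val_one, Matrix.head_cons, Pi.zero_apply]
  field_simp
  ring

lemma pdA3_one (hL : Differentiable ℝ L) (hX : ContDiff ℝ ∞ X) (ζ : ℝ)
    (hne : d1 X 0 ζ ≠ 0) :
    pdA3 (homog L) 1 (X ζ, deriv X ζ, deriv (deriv X) ζ)
      = pdA2 L 0 (Fc X ζ) / d1 X 0 ζ := by
  have h0 : deriv X ζ 0 ≠ 0 := by rw [hc1 hX]; exact hne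
  rw [pdA3_deriv' _ _ _ 1 (homog_secA_diff hL _ _ _ h0)]
  have hfun : (fun s : ℝ => homog L (X ζ, deriv X ζ,
        deriv (deriv X) ζ + s • (Pi.single 1 1 : Fin 3 → ℝ)))
      = fun s : ℝ => d1 X 0 ζ *
          L ((Fc X ζ).1, (Fc X ζ).2.1, (Fc X ζ).2.2.1,
            ![(d2 X 1 ζ + s) / d1 X 0 ζ ^ 2 - d2 X 0 ζ * d1 X 1 ζ / d1 X 0 ζ ^ 3,
              (Fc X ζ).2.2.2 1]) := by
    funext s
    simp [homog, Pi.single_apply, Fc, hc1 hX, hc2 hX]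
  rw [hfun]
  have hcomp1 : HasDerivAt (fun s : ℝ =>
      (d2 X 1 ζ + s) / d1 X 0 ζ ^ 2 - d2 X 0 ζ * d1 X 1 ζ / d1 X 0 ζ ^ 3)
      (1 / d1 X 0 ζ ^ 2) 0 := by
    have h := ((((hasDerivAt_id (0:ℝ)).const_add (d2 X 1 ζ)).div_const
      (d1 X 0 ζ ^ 2))).sub_const (d2 X 0 ζ * d1 X 1 ζ / d1 X 0 ζ ^ 3)
    exact h
  have hcurve : HasDerivAt (fun s : ℝ =>
      (((Fc X ζ).1, (Fc X ζ).2.1, (Fc X ζ).2.2.1,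
        ![(d2 X 1 ζ + s) / d1 X 0 ζ ^ 2 - d2 X 0 ζ * d1 X 1 ζ / d1 X 0 ζ ^ 3,
          (Fc X ζ).2.2.2 1]) : E2))
      ((0:ℝ), 0, 0, ![1 / d1 X 0 ζ ^ 2, 0]) 0 :=
    (hasDerivAt_const _ _).prodMk ((hasDerivAt_const _ _).prodMk
      ((hasDerivAt_const _ _).prodMk (hasDerivAt_fin2 hcomp1 (hasDerivAt_const _ _))))
  rw [((hasDerivAt_L_comp hL hcurve).const_mul (d1 X 0 ζ)).deriv]
  have hpt : (((Fc X ζ).1, (Fc X ζ).2.1, (Fc X ζ).2.2.1,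
      ![(d2 X 1 ζ + 0) / d1 X 0 ζ ^ 2 - d2 X 0 ζ * d1 X 1 ζ / d1 X 0 ζ ^ 3,
        (Fc X ζ).2.2.2 1]) : E2) = Fc X ζ := by
    have h4 : ![(d2 X 1 ζ + 0) / d1 X 0 ζ ^ 2 - d2 X 0 ζ * d1 X 1 ζ / d1 X 0 ζ ^ 3,
        (Fc X ζ).2.2.2 1] = (Fc X ζ).2.2.2 := by
      funext i; fin_cases i <;> simp [Fc]
    rw [h4]
  rw [hpt, fderiv_L_apply hL]
  simp only [Matrix.cons_val_zero, Matrix.cons_val_one, Matrix.head_cons, Pi.zero_apply]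
  field_simp
  ring

lemma pdA3_two (hL : Differentiable ℝ L) (hX : ContDiff ℝ ∞ X) (ζ : ℝ)
    (hne : d1 X 0 ζ ≠ 0) :
    pdA3 (homog L) 2 (X ζ, deriv X ζ, deriv (deriv X) ζ)
      = pdA2 L 1 (Fc X ζ) / d1 X 0 ζ := by
  have h0 : deriv X ζ 0 ≠ 0 := by rw [hc1 hX]; exact hne
  rw [pdA3_deriv' _ _ _ 2 (homog_secA_diff hL _ _ _ h0)]
  have hfun : (fun s : ℝ => homog L (X ζ, deriv X ζ,
        deriv (deriv X) ζ + s • (Pi.single 2 1 : Fin 3 → ℝ)))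
      = fun s : ℝ => d1 X 0 ζ *
          L ((Fc X ζ).1, (Fc X ζ).2.1, (Fc X ζ).2.2.1,
            ![(Fc X ζ).2.2.2 0,
              (d2 X 2 ζ + s) / d1 X 0 ζ ^ 2 - d2 X 0 ζ * d1 X 2 ζ / d1 X 0 ζ ^ 3]) := by
    funext s
    simp [homog, Pi.single_apply, Fc, hc1 hX, hc2 hX]
  rw [hfun]
  have hcomp2 : HasDerivAt (fun s : ℝ =>
      (d2 X 2 ζ + s) / d1 X 0 ζ ^ 2 - d2 X 0 ζ * d1 X 2 ζ / d1 X 0 ζ ^ 3)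
      (1 / d1 X 0 ζ ^ 2) 0 := by
    have h := ((((hasDerivAt_id (0:ℝ)).const_add (d2 X 2 ζ)).div_const
      (d1 X 0 ζ ^ 2))).sub_const (d2 X 0 ζ * d1 X 2 ζ / d1 X 0 ζ ^ 3)
    exact h
  have hcurve : HasDerivAt (fun s : ℝ =>
      (((Fc X ζ).1, (Fc X ζ).2.1, (Fc X ζ).2.2.1,
        ![(Fc X ζ).2.2.2 0,
          (d2 X 2 ζ + s) / d1 X 0 ζ ^ 2 - d2 X 0 ζ * d1 X 2 ζ / d1 X 0 ζ ^ 3]) : E2))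
      ((0:ℝ), 0, 0, ![0, 1 / d1 X 0 ζ ^ 2]) 0 :=
    (hasDerivAt_const _ _).prodMk ((hasDerivAt_const _ _).prodMk
      ((hasDerivAt_const _ _).prodMk (hasDerivAt_fin2 (hasDerivAt_const _ _) hcomp2)))
  rw [((hasDerivAt_L_comp hL hcurve).const_mul (d1 X 0 ζ)).deriv]
  have hpt : (((Fc X ζ).1, (Fc X ζ).2.1, (Fc X ζ).2.2.1,
      ![(Fc X ζ).2.2.2 0,
        (d2 X 2 ζ + 0) / d1 X 0 ζ ^ 2 - d2 X 0 ζ * d1 X 2 ζ / d1 X 0 ζ ^ 3]) : E2)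
      = Fc X ζ := by
    have h4 : ![(Fc X ζ).2.2.2 0,
        (d2 X 2 ζ + 0) / d1 X 0 ζ ^ 2 - d2 X 0 ζ * d1 X 2 ζ / d1 X 0 ζ ^ 3]
        = (Fc X ζ).2.2.2 := by
      funext i; fin_cases i <;> simp [Fc]
    rw [h4]
  rw [hpt, fderiv_L_apply hL]
  simp only [Matrix.cons_val_zero, Matrix.cons_val_one, Matrix.head_cons, Pi.zero_apply]
  field_simp
  ring

lemma pdU3_one (hL : Differentiable ℝ L) (hX : ContDiff ℝ ∞ X) (ζ : ℝ)
    (hne : d1 X 0 ζ ≠ 0) :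
    pdU3 (homog L) 1 (X ζ, deriv X ζ, deriv (deriv X) ζ)
      = pdV2 L 0 (Fc X ζ) - d2 X 0 ζ / d1 X 0 ζ ^ 2 * pdA2 L 0 (Fc X ζ) := by
  have h0 : deriv X ζ 0 ≠ 0 := by rw [hc1 hX]; exact hne
  rw [pdU3_deriv' _ _ _ 1 (homog_secU_diff hL _ _ _ h0)]
  have hfun : (fun s : ℝ => homog L (X ζ,
        deriv X ζ + s • (Pi.single 1 1 : Fin 3 → ℝ), deriv (deriv X) ζ))
      = fun s : ℝ => d1 X 0 ζ *
          L ((Fc X ζ).1, (Fc X ζ).2.1,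
            ![(d1 X 1 ζ + s) / d1 X 0 ζ, (Fc X ζ).2.2.1 1],
            ![d2 X 1 ζ / d1 X 0 ζ ^ 2 - d2 X 0 ζ * (d1 X 1 ζ + s) / d1 X 0 ζ ^ 3,
              (Fc X ζ).2.2.2 1]) := by
    funext s
    simp [homog, Pi.single_apply, Fc, hc1 hX, hc2 hX]
  rw [hfun]
  have hv : HasDerivAt (fun s : ℝ => (d1 X 1 ζ + s) / d1 X 0 ζ) (1 / d1 X 0 ζ) 0 :=
    ((hasDerivAt_id (0:ℝ)).const_add (d1 X 1 ζ)).div_const _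
  have ha : HasDerivAt (fun s : ℝ =>
      d2 X 1 ζ / d1 X 0 ζ ^ 2 - d2 X 0 ζ * (d1 X 1 ζ + s) / d1 X 0 ζ ^ 3)
      (-(d2 X 0 ζ / d1 X 0 ζ ^ 3)) 0 := by
    have h := (hasDerivAt_const (0:ℝ) (d2 X 1 ζ / d1 X 0 ζ ^ 2)).sub
      ((((hasDerivAt_id (0:ℝ)).const_add (d1 X 1 ζ)).const_mul (d2 X 0 ζ)).div_const
        (d1 X 0 ζ ^ 3))
    exact h.congr_deriv (by ring)
  have hcurve : HasDerivAt (fun s : ℝ =>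
      (((Fc X ζ).1, (Fc X ζ).2.1,
        ![(d1 X 1 ζ + s) / d1 X 0 ζ, (Fc X ζ).2.2.1 1],
        ![d2 X 1 ζ / d1 X 0 ζ ^ 2 - d2 X 0 ζ * (d1 X 1 ζ + s) / d1 X 0 ζ ^ 3,
          (Fc X ζ).2.2.2 1]) : E2))
      ((0:ℝ), 0, ![1 / d1 X 0 ζ, 0], ![-(d2 X 0 ζ / d1 X 0 ζ ^ 3), 0]) 0 :=
    (hasDerivAt_const _ _).prodMk ((hasDerivAt_const _ _).prodMk
      ((hasDerivAt_fin2 hv (hasDerivAt_const _ _)).prodMk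
        (hasDerivAt_fin2 ha (hasDerivAt_const _ _))))
  rw [((hasDerivAt_L_comp hL hcurve).const_mul (d1 X 0 ζ)).deriv]
  have h3 : ![(d1 X 1 ζ + 0) / d1 X 0 ζ, (Fc X ζ).2.2.1 1] = (Fc X ζ).2.2.1 := by
    funext i; fin_cases i <;> simp [Fc]
  have h4 : ![d2 X 1 ζ / d1 X 0 ζ ^ 2 - d2 X 0 ζ * (d1 X 1 ζ + 0) / d1 X 0 ζ ^ 3,
      (Fc X ζ).2.2.2 1] = (Fc X ζ).2.2.2 := by
    funext i; fin_cases i <;> simp [Fc]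
  rw [h3, h4, fderiv_L_apply hL]
  simp only [Matrix.cons_val_zero, Matrix.cons_val_one, Matrix.head_cons, Pi.zero_apply]
  field_simp
  ring

lemma pdU3_two (hL : Differentiable ℝ L) (hX : ContDiff ℝ ∞ X) (ζ : ℝ)
    (hne : d1 X 0 ζ ≠ 0) :
    pdU3 (homog L) 2 (X ζ, deriv X ζ, deriv (deriv X) ζ)
      = pdV2 L 1 (Fc X ζ) - d2 X 0 ζ / d1 X 0 ζ ^ 2 * pdA2 L 1 (Fc X ζ) := by
  have h0 : deriv X ζ 0 ≠ 0 := by rw [hc1 hX]; exact hne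
  rw [pdU3_deriv' _ _ _ 2 (homog_secU_diff hL _ _ _ h0)]
  have hfun : (fun s : ℝ => homog L (X ζ,
        deriv X ζ + s • (Pi.single 2 1 : Fin 3 → ℝ), deriv (deriv X) ζ))
      = fun s : ℝ => d1 X 0 ζ *
          L ((Fc X ζ).1, (Fc X ζ).2.1,
            ![(Fc X ζ).2.2.1 0, (d1 X 2 ζ + s) / d1 X 0 ζ],
            ![(Fc X ζ).2.2.2 0,
              d2 X 2 ζ / d1 X 0 ζ ^ 2 - d2 X 0 ζ * (d1 X 2 ζ + s) / d1 X 0 ζ ^ 3]) := by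
    funext s
    simp [homog, Pi.single_apply, Fc, hc1 hX, hc2 hX]
  rw [hfun]
  have hv : HasDerivAt (fun s : ℝ => (d1 X 2 ζ + s) / d1 X 0 ζ) (1 / d1 X 0 ζ) 0 :=
    ((hasDerivAt_id (0:ℝ)).const_add (d1 X 2 ζ)).div_const _
  have ha : HasDerivAt (fun s : ℝ =>
      d2 X 2 ζ / d1 X 0 ζ ^ 2 - d2 X 0 ζ * (d1 X 2 ζ + s) / d1 X 0 ζ ^ 3)
      (-(d2 X 0 ζ / d1 X 0 ζ ^ 3)) 0 := by
    have h := (hasDerivAt_const (0:ℝ) (d2 X 2 ζ / d1 X 0 ζ ^ 2)).sub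
      ((((hasDerivAt_id (0:ℝ)).const_add (d1 X 2 ζ)).const_mul (d2 X 0 ζ)).div_const
        (d1 X 0 ζ ^ 3))
    exact h.congr_deriv (by ring)
  have hcurve : HasDerivAt (fun s : ℝ =>
      (((Fc X ζ).1, (Fc X ζ).2.1,
        ![(Fc X ζ).2.2.1 0, (d1 X 2 ζ + s) / d1 X 0 ζ],
        ![(Fc X ζ).2.2.2 0,
          d2 X 2 ζ / d1 X 0 ζ ^ 2 - d2 X 0 ζ * (d1 X 2 ζ + s) / d1 X 0 ζ ^ 3]) : E2))
      ((0:ℝ), 0, ![0, 1 / d1 X 0 ζ], ![0, -(d2 X 0 ζ / d1 X 0 ζ ^ 3)]) 0 :=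
    (hasDerivAt_const _ _).prodMk ((hasDerivAt_const _ _).prodMk
      ((hasDerivAt_fin2 (hasDerivAt_const _ _) hv).prodMk
        (hasDerivAt_fin2 (hasDerivAt_const _ _) ha)))
  rw [((hasDerivAt_L_comp hL hcurve).const_mul (d1 X 0 ζ)).deriv]
  have h3 : ![(Fc X ζ).2.2.1 0, (d1 X 2 ζ + 0) / d1 X 0 ζ] = (Fc X ζ).2.2.1 := by
    funext i; fin_cases i <;> simp [Fc]
  have h4 : ![(Fc X ζ).2.2.2 0,
      d2 X 2 ζ / d1 X 0 ζ ^ 2 - d2 X 0 ζ * (d1 X 2 ζ + 0) / d1 X 0 ζ ^ 3] = (Fc X ζ).2.2.2 := by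
    funext i; fin_cases i <;> simp [Fc]
  rw [h3, h4, fderiv_L_apply hL]
  simp only [Matrix.cons_val_zero, Matrix.cons_val_one, Matrix.head_cons, Pi.zero_apply]
  field_simp
  ring

lemma pdU3_zero (hL : Differentiable ℝ L) (hX : ContDiff ℝ ∞ X) (ζ : ℝ)
    (hne : d1 X 0 ζ ≠ 0) :
    pdU3 (homog L) 0 (X ζ, deriv X ζ, deriv (deriv X) ζ)
      = L (Fc X ζ)
        - d1 X 1 ζ / d1 X 0 ζ * pdV2 L 0 (Fc X ζ)
        - d1 X 2 ζ / d1 X 0 ζ * pdV2 L 1 (Fc X ζ)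
        + (3 * d2 X 0 ζ * d1 X 1 ζ / d1 X 0 ζ ^ 3 - 2 * d2 X 1 ζ / d1 X 0 ζ ^ 2)
            * pdA2 L 0 (Fc X ζ)
        + (3 * d2 X 0 ζ * d1 X 2 ζ / d1 X 0 ζ ^ 3 - 2 * d2 X 2 ζ / d1 X 0 ζ ^ 2)
            * pdA2 L 1 (Fc X ζ) := by
  have h0 : deriv X ζ 0 ≠ 0 := by rw [hc1 hX]; exact hne
  rw [pdU3_deriv' _ _ _ 0 (homog_secU_diff hL _ _ _ h0)]
  have hfun : (fun s : ℝ => homog L (X ζ,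
        deriv X ζ + s • (Pi.single 0 1 : Fin 3 → ℝ), deriv (deriv X) ζ))
      = fun s : ℝ => (d1 X 0 ζ + s) *
          L ((Fc X ζ).1, (Fc X ζ).2.1,
            ![d1 X 1 ζ / (d1 X 0 ζ + s), d1 X 2 ζ / (d1 X 0 ζ + s)],
            ![d2 X 1 ζ / (d1 X 0 ζ + s) ^ 2 - d2 X 0 ζ * d1 X 1 ζ / (d1 X 0 ζ + s) ^ 3,
              d2 X 2 ζ / (d1 X 0 ζ + s) ^ 2 - d2 X 0 ζ * d1 X 2 ζ / (d1 X 0 ζ + s) ^ 3]) := by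
    funext s
    simp [homog, Pi.single_apply, Fc, hc1 hX, hc2 hX]
  rw [hfun]
  have hden : HasDerivAt (fun s : ℝ => d1 X 0 ζ + s) 1 0 :=
    (hasDerivAt_id (0:ℝ)).const_add (d1 X 0 ζ)
  have hne' : d1 X 0 ζ + 0 ≠ 0 := by simpa using hne
  have hv1 : HasDerivAt (fun s : ℝ => d1 X 1 ζ / (d1 X 0 ζ + s))
      (-(d1 X 1 ζ / d1 X 0 ζ ^ 2)) 0 := by
    have h := (hasDerivAt_const (0:ℝ) (d1 X 1 ζ)).div hden hne'
    exact h.congr_deriv (by field_simp; ring)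
  have hv2 : HasDerivAt (fun s : ℝ => d1 X 2 ζ / (d1 X 0 ζ + s))
      (-(d1 X 2 ζ / d1 X 0 ζ ^ 2)) 0 := by
    have h := (hasDerivAt_const (0:ℝ) (d1 X 2 ζ)).div hden hne'
    exact h.congr_deriv (by field_simp; ring)
  have ha1 : HasDerivAt (fun s : ℝ =>
      d2 X 1 ζ / (d1 X 0 ζ + s) ^ 2 - d2 X 0 ζ * d1 X 1 ζ / (d1 X 0 ζ + s) ^ 3)
      (3 * d2 X 0 ζ * d1 X 1 ζ / d1 X 0 ζ ^ 4 - 2 * d2 X 1 ζ / d1 X 0 ζ ^ 3) 0 := by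
    have h := ((hasDerivAt_const (0:ℝ) (d2 X 1 ζ)).div (hden.pow 2)
      (pow_ne_zero 2 hne')).sub
      ((hasDerivAt_const (0:ℝ) (d2 X 0 ζ * d1 X 1 ζ)).div (hden.pow 3)
        (pow_ne_zero 3 hne'))
    exact h.congr_deriv (by simp only [Pi.pow_apply]; field_simp; ring)
  have ha2 : HasDerivAt (fun s : ℝ =>
      d2 X 2 ζ / (d1 X 0 ζ + s) ^ 2 - d2 X 0 ζ * d1 X 2 ζ / (d1 X 0 ζ + s) ^ 3)
      (3 * d2 X 0 ζ * d1 X 2 ζ / d1 X 0 ζ ^ 4 - 2 * d2 X 2 ζ / d1 X 0 ζ ^ 3) 0 := by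
    have h := ((hasDerivAt_const (0:ℝ) (d2 X 2 ζ)).div (hden.pow 2)
      (pow_ne_zero 2 hne')).sub
      ((hasDerivAt_const (0:ℝ) (d2 X 0 ζ * d1 X 2 ζ)).div (hden.pow 3)
        (pow_ne_zero 3 hne'))
    exact h.congr_deriv (by simp only [Pi.pow_apply]; field_simp; ring)
  have hcurve : HasDerivAt (fun s : ℝ =>
      (((Fc X ζ).1, (Fc X ζ).2.1,
        ![d1 X 1 ζ / (d1 X 0 ζ + s), d1 X 2 ζ / (d1 X 0 ζ + s)],
        ![d2 X 1 ζ / (d1 X 0 ζ + s) ^ 2 - d2 X 0 ζ * d1 X 1 ζ / (d1 X 0 ζ + s) ^ 3,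
          d2 X 2 ζ / (d1 X 0 ζ + s) ^ 2 - d2 X 0 ζ * d1 X 2 ζ / (d1 X 0 ζ + s) ^ 3]) : E2))
      ((0:ℝ), 0, ![-(d1 X 1 ζ / d1 X 0 ζ ^ 2), -(d1 X 2 ζ / d1 X 0 ζ ^ 2)],
        ![3 * d2 X 0 ζ * d1 X 1 ζ / d1 X 0 ζ ^ 4 - 2 * d2 X 1 ζ / d1 X 0 ζ ^ 3,
          3 * d2 X 0 ζ * d1 X 2 ζ / d1 X 0 ζ ^ 4 - 2 * d2 X 2 ζ / d1 X 0 ζ ^ 3]) 0 :=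
    (hasDerivAt_const _ _).prodMk ((hasDerivAt_const _ _).prodMk
      ((hasDerivAt_fin2 hv1 hv2).prodMk (hasDerivAt_fin2 ha1 ha2)))
  erw [(hden.mul (hasDerivAt_L_comp hL hcurve)).deriv]
  have h3 : ![d1 X 1 ζ / (d1 X 0 ζ + 0), d1 X 2 ζ / (d1 X 0 ζ + 0)] = (Fc X ζ).2.2.1 := by
    funext i; fin_cases i <;> simp [Fc]
  have h4 : ![d2 X 1 ζ / (d1 X 0 ζ + 0) ^ 2 - d2 X 0 ζ * d1 X 1 ζ / (d1 X 0 ζ + 0) ^ 3,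
      d2 X 2 ζ / (d1 X 0 ζ + 0) ^ 2 - d2 X 0 ζ * d1 X 2 ζ / (d1 X 0 ζ + 0) ^ 3]
      = (Fc X ζ).2.2.2 := by
    funext i; fin_cases i <;> simp [Fc]
  rw [h3, h4, fderiv_L_apply hL]
  simp only [Matrix.cons_val_zero, Matrix.cons_val_one, Matrix.head_cons, Pi.zero_apply,
    add_zero]
  field_simp
  ring

/-! ### EP2 side: the reparametrized curve -/

section EP2side

variable {τ : ℝ → ℝ} {y : ℝ → Fin 2 → ℝ}

lemma y_contDiff (hX : ContDiff ℝ ∞ X) (hτ : ContDiff ℝ ∞ τ)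
    (hy : y = fun s => ![X (τ s) 1, X (τ s) 2]) : ContDiff ℝ ∞ y := by
  subst hy
  exact contDiff_fin2 ((comp_contDiff hX 1).comp hτ) ((comp_contDiff hX 2).comp hτ)

lemma reparam_X0 {E : Type*} [NormedAddCommGroup E] [NormedSpace ℝ E]
    (hX : ContDiff ℝ ∞ X) (hpos : ∀ z, d1 X 0 z ≠ 0) (G : ℝ → E)
    (hG : Differentiable ℝ G) (ζ : ℝ) :
    deriv G (X ζ 0) = (d1 X 0 ζ)⁻¹ • deriv (fun z => G (X z 0)) ζ :=
  deriv_reparam (hG _) (((comp_contDiff hX 0).differentiable one_le_inf) ζ) (hpos ζ)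

lemma y_zero (hX : ContDiff ℝ ∞ X) (hinv : ∀ ζ : ℝ, τ (X ζ 0) = ζ)
    (hy : y = fun s => ![X (τ s) 1, X (τ s) 2]) (ζ : ℝ) :
    y (X ζ 0) = ![X ζ 1, X ζ 2] := by
  subst hy
  simp [hinv ζ]

lemma y_one (hX : ContDiff ℝ ∞ X) (hτ : ContDiff ℝ ∞ τ)
    (hinv : ∀ ζ : ℝ, τ (X ζ 0) = ζ) (hpos : ∀ z, d1 X 0 z ≠ 0)
    (hy : y = fun s => ![X (τ s) 1, X (τ s) 2]) (ζ : ℝ) :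
    deriv y (X ζ 0) = (Fc X ζ).2.2.1 := by
  have hysm := y_contDiff hX hτ hy
  rw [reparam_X0 hX hpos y (hysm.differentiable one_le_inf) ζ]
  have hcomp : (fun z => y (X z 0)) = fun z => ![X z 1, X z 2] := by
    funext z
    exact y_zero hX hinv hy z
  rw [hcomp]
  have hd : HasDerivAt (fun z => (![X z 1, X z 2] : Fin 2 → ℝ))
      ![d1 X 1 ζ, d1 X 2 ζ] ζ :=
    hasDerivAt_fin2 (((comp_contDiff hX 1).differentiable one_le_inf ζ).hasDerivAt)
      (((comp_contDiff hX 2).differentiable one_le_inf ζ).hasDerivAt)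
  rw [hd.deriv]
  funext i
  fin_cases i <;> simp [Fc, div_eq_inv_mul]

lemma y_two (hX : ContDiff ℝ ∞ X) (hτ : ContDiff ℝ ∞ τ)
    (hinv : ∀ ζ : ℝ, τ (X ζ 0) = ζ) (hpos : ∀ z, d1 X 0 z ≠ 0)
    (hy : y = fun s => ![X (τ s) 1, X (τ s) 2]) (ζ : ℝ) :
    deriv (deriv y) (X ζ 0) = (Fc X ζ).2.2.2 := by
  have hysm := y_contDiff hX hτ hy
  have hysm' : ContDiff ℝ ∞ (deriv y) := (contDiff_infty_iff_deriv.mp hysm).2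
  rw [reparam_X0 hX hpos (deriv y) (hysm'.differentiable one_le_inf) ζ]
  have hcomp : (fun z => deriv y (X z 0)) = fun z => (Fc X z).2.2.1 := by
    funext z
    exact y_one hX hτ hinv hpos hy z
  rw [hcomp]
  have hv1 : HasDerivAt (fun z => d1 X 1 z / d1 X 0 z)
      ((d2 X 1 ζ * d1 X 0 ζ - d1 X 1 ζ * d2 X 0 ζ) / d1 X 0 ζ ^ 2) ζ :=
    ((d1_contDiff hX 1).differentiable one_le_inf ζ).hasDerivAt.div
      (((d1_contDiff hX 0).differentiable one_le_inf ζ).hasDerivAt) (hpos ζ)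
  have hv2 : HasDerivAt (fun z => d1 X 2 z / d1 X 0 z)
      ((d2 X 2 ζ * d1 X 0 ζ - d1 X 2 ζ * d2 X 0 ζ) / d1 X 0 ζ ^ 2) ζ :=
    ((d1_contDiff hX 2).differentiable one_le_inf ζ).hasDerivAt.div
      (((d1_contDiff hX 0).differentiable one_le_inf ζ).hasDerivAt) (hpos ζ)
  have hd : HasDerivAt (fun z => ((Fc X z).2.2.1 : Fin 2 → ℝ))
      ![(d2 X 1 ζ * d1 X 0 ζ - d1 X 1 ζ * d2 X 0 ζ) / d1 X 0 ζ ^ 2,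
        (d2 X 2 ζ * d1 X 0 ζ - d1 X 2 ζ * d2 X 0 ζ) / d1 X 0 ζ ^ 2] ζ := by
    have : (fun z => ((Fc X z).2.2.1 : Fin 2 → ℝ))
        = fun z => ![d1 X 1 z / d1 X 0 z, d1 X 2 z / d1 X 0 z] := rfl
    rw [this]
    exact hasDerivAt_fin2 hv1 hv2
  rw [hd.deriv]
  funext i
  have h0 := hpos ζ
  fin_cases i <;>
    · simp [Fc, smul_eq_mul]
      field_simp

lemma pt_eq (hX : ContDiff ℝ ∞ X) (hτ : ContDiff ℝ ∞ τ)
    (hinv : ∀ ζ : ℝ, τ (X ζ 0) = ζ) (hpos : ∀ z, d1 X 0 z ≠ 0)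
    (hy : y = fun s => ![X (τ s) 1, X (τ s) 2]) (ζ : ℝ) :
    ((X ζ 0, y (X ζ 0), deriv y (X ζ 0), deriv (deriv y) (X ζ 0)) : E2) = Fc X ζ := by
  rw [y_zero hX hinv hy ζ, y_one hX hτ hinv hpos hy ζ, y_two hX hτ hinv hpos hy ζ]
  rfl

end EP2side

section EP2eq

variable {τ : ℝ → ℝ} {y : ℝ → Fin 2 → ℝ}

lemma EP2_eq (hL : ContDiff ℝ ∞ L) (hX : ContDiff ℝ ∞ X) (hτ : ContDiff ℝ ∞ τ)
    (hinv : ∀ ζ : ℝ, τ (X ζ 0) = ζ) (hpos : ∀ z, d1 X 0 z ≠ 0)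
    (hy : y = fun s => ![X (τ s) 1, X (τ s) 2]) (a : Fin 2) (ζ : ℝ) :
    EP2 L y a (X ζ 0)
      = pdX2 L a (Fc X ζ)
        - (d1 X 0 ζ)⁻¹ * deriv (fun z => pdV2 L a (Fc X z)) ζ
        + (d1 X 0 ζ)⁻¹ * deriv (fun z =>
            (d1 X 0 z)⁻¹ * deriv (fun u => pdA2 L a (Fc X u)) z) ζ := by
  have hysm := y_contDiff hX hτ hy
  have hy' : ContDiff ℝ ∞ (deriv y) := (contDiff_infty_iff_deriv.mp hysm).2
  have hy'' : ContDiff ℝ ∞ (deriv (deriv y)) := (contDiff_infty_iff_deriv.mp hy').2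
  have hcurve : ContDiff ℝ ∞ (fun s => ((s, y s, deriv y s, deriv (deriv y) s) : E2)) :=
    contDiff_id.prodMk (hysm.prodMk (hy'.prodMk hy''))
  have hGV : Differentiable ℝ (fun s => pdV2 L a (s, y s, deriv y s, deriv (deriv y) s)) :=
    ((pdV2_contDiff hL a).comp hcurve).differentiable one_le_inf
  have hGA : Differentiable ℝ (fun s => pdA2 L a (s, y s, deriv y s, deriv (deriv y) s)) :=
    ((pdA2_contDiff hL a).comp hcurve).differentiable one_le_inf
  have hGA' : ContDiff ℝ ∞ (fun s => pdA2 L a (s, y s, deriv y s, deriv (deriv y) s)) :=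
    (pdA2_contDiff hL a).comp hcurve
  have hptz : ∀ z : ℝ, ((X z 0, y (X z 0), deriv y (X z 0), deriv (deriv y) (X z 0)) : E2)
      = Fc X z := fun z => pt_eq hX hτ hinv hpos hy z
  have hcompV : (fun z => pdV2 L a (X z 0, y (X z 0), deriv y (X z 0),
      deriv (deriv y) (X z 0))) = fun z => pdV2 L a (Fc X z) := by
    funext z; rw [hptz z]
  have hcompA : (fun z => pdA2 L a (X z 0, y (X z 0), deriv y (X z 0),
      deriv (deriv y) (X z 0))) = fun z => pdA2 L a (Fc X z) := by
    funext z; rw [hptz z]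
  rw [EP2]
  rw [hptz ζ]
  rw [reparam_X0 hX hpos _ hGV ζ]
  rw [reparam_X0 hX hpos
    (deriv (fun s => pdA2 L a (s, y s, deriv y s, deriv (deriv y) s)))
    ((contDiff_infty_iff_deriv.mp hGA').2.differentiable one_le_inf) ζ]
  have h3 : (fun z => deriv
        (fun s => pdA2 L a (s, y s, deriv y s, deriv (deriv y) s)) (X z 0))
      = fun z => (d1 X 0 z)⁻¹ * deriv (fun u => pdA2 L a (Fc X u)) z := by
    funext z
    rw [reparam_X0 hX hpos _ hGA z]
    rw [show (fun u => pdA2 L a (X u 0, y (X u 0), deriv y (X u 0),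
        deriv (deriv y) (X u 0))) = fun u => pdA2 L a (Fc X u) from hcompA]
    simp [smul_eq_mul]
  rw [h3]
  rw [show (fun z => pdV2 L a (X z 0, y (X z 0), deriv y (X z 0),
      deriv (deriv y) (X z 0))) = fun z => pdV2 L a (Fc X z) from hcompV]
  simp [smul_eq_mul]

end EP2eq

lemma lam_deriv (hL : ContDiff ℝ ∞ L) (hX : ContDiff ℝ ∞ X)
    (hpos : ∀ z, d1 X 0 z ≠ 0) (ζ : ℝ) :
    deriv (fun z => L (Fc X z)) ζ
      = d1 X 0 ζ * pdT2 L (Fc X ζ)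
        + d1 X 1 ζ * pdX2 L 0 (Fc X ζ) + d1 X 2 ζ * pdX2 L 1 (Fc X ζ)
        + deriv (fun u => d1 X 1 u / d1 X 0 u) ζ * pdV2 L 0 (Fc X ζ)
        + deriv (fun u => d1 X 2 u / d1 X 0 u) ζ * pdV2 L 1 (Fc X ζ)
        + deriv (fun u => d2 X 1 u / d1 X 0 u ^ 2
            - d2 X 0 u * d1 X 1 u / d1 X 0 u ^ 3) ζ * pdA2 L 0 (Fc X ζ)
        + deriv (fun u => d2 X 2 u / d1 X 0 u ^ 2
            - d2 X 0 u * d1 X 2 u / d1 X 0 u ^ 3) ζ * pdA2 L 1 (Fc X ζ) := by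
  have hv1 : DifferentiableAt ℝ (fun u => d1 X 1 u / d1 X 0 u) ζ :=
    DifferentiableAt.div ((d1_contDiff hX 1).differentiable one_le_inf ζ)
      ((d1_contDiff hX 0).differentiable one_le_inf ζ) (hpos ζ)
  have hv2 : DifferentiableAt ℝ (fun u => d1 X 2 u / d1 X 0 u) ζ :=
    DifferentiableAt.div ((d1_contDiff hX 2).differentiable one_le_inf ζ)
      ((d1_contDiff hX 0).differentiable one_le_inf ζ) (hpos ζ)
  have hw1 : DifferentiableAt ℝ (fun u => d2 X 1 u / d1 X 0 u ^ 2
      - d2 X 0 u * d1 X 1 u / d1 X 0 u ^ 3) ζ :=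
    DifferentiableAt.sub
      (DifferentiableAt.div ((d2_contDiff hX 1).differentiable one_le_inf ζ)
        (((d1_contDiff hX 0).differentiable one_le_inf ζ).pow 2)
        (pow_ne_zero _ (hpos ζ)))
      (DifferentiableAt.div
        (((d2_contDiff hX 0).differentiable one_le_inf ζ).mul
          ((d1_contDiff hX 1).differentiable one_le_inf ζ))
        (((d1_contDiff hX 0).differentiable one_le_inf ζ).pow 3)
        (pow_ne_zero _ (hpos ζ)))
  have hw2 : DifferentiableAt ℝ (fun u => d2 X 2 u / d1 X 0 u ^ 2
      - d2 X 0 u * d1 X 2 u / d1 X 0 u ^ 3) ζ :=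
    DifferentiableAt.sub
      (DifferentiableAt.div ((d2_contDiff hX 2).differentiable one_le_inf ζ)
        (((d1_contDiff hX 0).differentiable one_le_inf ζ).pow 2)
        (pow_ne_zero _ (hpos ζ)))
      (DifferentiableAt.div
        (((d2_contDiff hX 0).differentiable one_le_inf ζ).mul
          ((d1_contDiff hX 2).differentiable one_le_inf ζ))
        (((d1_contDiff hX 0).differentiable one_le_inf ζ).pow 3)
        (pow_ne_zero _ (hpos ζ)))
  have hFc : HasDerivAt (Fc X)
      ((d1 X 0 ζ, ![d1 X 1 ζ, d1 X 2 ζ],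
        ![deriv (fun u => d1 X 1 u / d1 X 0 u) ζ, deriv (fun u => d1 X 2 u / d1 X 0 u) ζ],
        ![deriv (fun u => d2 X 1 u / d1 X 0 u ^ 2
            - d2 X 0 u * d1 X 1 u / d1 X 0 u ^ 3) ζ,
          deriv (fun u => d2 X 2 u / d1 X 0 u ^ 2
            - d2 X 0 u * d1 X 2 u / d1 X 0 u ^ 3) ζ]) : E2) ζ := by
    refine HasDerivAt.prodMk ?_ (HasDerivAt.prodMk ?_ (HasDerivAt.prodMk ?_ ?_))
    · exact ((comp_contDiff hX 0).differentiable one_le_inf ζ).hasDerivAt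
    · exact hasDerivAt_fin2 (((comp_contDiff hX 1).differentiable one_le_inf ζ).hasDerivAt)
        (((comp_contDiff hX 2).differentiable one_le_inf ζ).hasDerivAt)
    · exact hasDerivAt_fin2 hv1.hasDerivAt hv2.hasDerivAt
    · exact hasDerivAt_fin2 hw1.hasDerivAt hw2.hasDerivAt
  rw [(hasDerivAt_L_comp (hL.differentiable one_le_inf) hFc).deriv,
    fderiv_L_apply (hL.differentiable one_le_inf)]
  simp only [Matrix.cons_val_zero, Matrix.cons_val_one, Matrix.head_cons]
  ring

/-! ### Abstract one-dimensional endgame lemmas -/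

section Endgame

variable {f Q R : ℝ → ℝ}

lemma endgame1 (hf : ContDiff ℝ ∞ f) (hQ : ContDiff ℝ ∞ Q) (hR : ContDiff ℝ ∞ R)
    (hfne : ∀ z, f z ≠ 0) (P : ℝ) (ζ : ℝ) :
    f ζ * P - deriv (fun s => Q s - deriv f s / f s ^ 2 * R s) ζ
      + deriv (deriv (fun s => R s / f s)) ζ
      = f ζ * (P - (f ζ)⁻¹ * deriv Q ζ
          + (f ζ)⁻¹ * deriv (fun z => (f z)⁻¹ * deriv R z) ζ) := by
  have hfd : Differentiable ℝ f := hf.differentiable one_le_inf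
  have hDf : ContDiff ℝ ∞ (deriv f) := (contDiff_infty_iff_deriv.mp hf).2
  have hDfd : Differentiable ℝ (deriv f) := hDf.differentiable one_le_inf
  have hQd : Differentiable ℝ Q := hQ.differentiable one_le_inf
  have hRd : Differentiable ℝ R := hR.differentiable one_le_inf
  have hDR : ContDiff ℝ ∞ (deriv R) := (contDiff_infty_iff_deriv.mp hR).2
  have hDRd : Differentiable ℝ (deriv R) := hDR.differentiable one_le_inf
  erw [((hQd ζ).hasDerivAt.sub
    ((((hDfd ζ).hasDerivAt.div ((hfd ζ).hasDerivAt.pow 2)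
      (pow_ne_zero _ (hfne ζ))).mul (hRd ζ).hasDerivAt))).deriv]
  have hin : deriv (fun s => R s / f s)
      = fun z => (deriv R z * f z - R z * deriv f z) / f z ^ 2 := by
    funext z
    exact ((hRd z).hasDerivAt.div (hfd z).hasDerivAt (hfne z)).deriv
  rw [hin]
  erw [((((hDRd ζ).hasDerivAt.mul (hfd ζ).hasDerivAt).sub
    ((hRd ζ).hasDerivAt.mul (hDfd ζ).hasDerivAt)).div
    ((hfd ζ).hasDerivAt.pow 2) (pow_ne_zero _ (hfne ζ))).deriv]
  erw [(((hfd ζ).hasDerivAt.inv (hfne ζ)).mul (hDRd ζ).hasDerivAt).deriv]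
  simp only [Pi.add_apply, Pi.sub_apply, Pi.mul_apply, Pi.div_apply, Pi.pow_apply,
    Pi.inv_apply, Pi.neg_apply]
  have h0 := hfne ζ
  field_simp
  ring

end Endgame

section Endgame2

variable {f g1 g2 Q1 Q2 R1 R2 lam T P1 P2 : ℝ → ℝ}

set_option maxHeartbeats 2000000 in
lemma endgame2 (hf : ContDiff ℝ ∞ f) (hg1 : ContDiff ℝ ∞ g1) (hg2 : ContDiff ℝ ∞ g2)
    (hQ1 : ContDiff ℝ ∞ Q1) (hQ2 : ContDiff ℝ ∞ Q2)
    (hR1 : ContDiff ℝ ∞ R1) (hR2 : ContDiff ℝ ∞ R2) (hlam : ContDiff ℝ ∞ lam)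
    (hfne : ∀ z, f z ≠ 0)
    (hdl : ∀ z, deriv lam z = f z * T z + g1 z * P1 z + g2 z * P2 z
        + deriv (fun u => g1 u / f u) z * Q1 z + deriv (fun u => g2 u / f u) z * Q2 z
        + deriv (fun u => deriv g1 u / f u ^ 2 - deriv f u * g1 u / f u ^ 3) z * R1 z
        + deriv (fun u => deriv g2 u / f u ^ 2 - deriv f u * g2 u / f u ^ 3) z * R2 z)
    (ζ : ℝ) :
    f ζ * T ζ
      - deriv (fun s => lam s - g1 s / f s * Q1 s - g2 s / f s * Q2 s
          + (3 * deriv f s * g1 s / f s ^ 3 - 2 * deriv g1 s / f s ^ 2) * R1 s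
          + (3 * deriv f s * g2 s / f s ^ 3 - 2 * deriv g2 s / f s ^ 2) * R2 s) ζ
      + deriv (deriv (fun s => -(g1 s / f s ^ 2 * R1 s) - g2 s / f s ^ 2 * R2 s)) ζ
      = -(g1 ζ * (P1 ζ - (f ζ)⁻¹ * deriv Q1 ζ
            + (f ζ)⁻¹ * deriv (fun z => (f z)⁻¹ * deriv R1 z) ζ))
        - g2 ζ * (P2 ζ - (f ζ)⁻¹ * deriv Q2 ζ
            + (f ζ)⁻¹ * deriv (fun z => (f z)⁻¹ * deriv R2 z) ζ) := by
  have hfd : Differentiable ℝ f := hf.differentiable one_le_inf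
  have hDf : ContDiff ℝ ∞ (deriv f) := (contDiff_infty_iff_deriv.mp hf).2
  have hDfd : Differentiable ℝ (deriv f) := hDf.differentiable one_le_inf
  have hg1d : Differentiable ℝ g1 := hg1.differentiable one_le_inf
  have hg2d : Differentiable ℝ g2 := hg2.differentiable one_le_inf
  have hDg1d : Differentiable ℝ (deriv g1) := (contDiff_infty_iff_deriv.mp hg1).2.differentiable one_le_inf
  have hDg2d : Differentiable ℝ (deriv g2) := (contDiff_infty_iff_deriv.mp hg2).2.differentiable one_le_inf
  have hQ1d : Differentiable ℝ Q1 := hQ1.differentiable one_le_inf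
  have hQ2d : Differentiable ℝ Q2 := hQ2.differentiable one_le_inf
  have hR1d : Differentiable ℝ R1 := hR1.differentiable one_le_inf
  have hR2d : Differentiable ℝ R2 := hR2.differentiable one_le_inf
  have hDR1d : Differentiable ℝ (deriv R1) := (contDiff_infty_iff_deriv.mp hR1).2.differentiable one_le_inf
  have hDR2d : Differentiable ℝ (deriv R2) := (contDiff_infty_iff_deriv.mp hR2).2.differentiable one_le_inf
  have hlamd : Differentiable ℝ lam := hlam.differentiable one_le_inf
  -- derivative of the pdU3-zero composite
  erw [(((((hlamd ζ).hasDerivAt.sub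
      ((((hg1d ζ).hasDerivAt.div (hfd ζ).hasDerivAt (hfne ζ)).mul (hQ1d ζ).hasDerivAt))).sub
      ((((hg2d ζ).hasDerivAt.div (hfd ζ).hasDerivAt (hfne ζ)).mul (hQ2d ζ).hasDerivAt))).add
      ((((((hDfd ζ).hasDerivAt.const_mul 3).mul (hg1d ζ).hasDerivAt).div
          ((hfd ζ).hasDerivAt.pow 3) (pow_ne_zero _ (hfne ζ))).sub
        (((hDg1d ζ).hasDerivAt.const_mul 2).div ((hfd ζ).hasDerivAt.pow 2)
          (pow_ne_zero _ (hfne ζ)))).mul (hR1d ζ).hasDerivAt)).add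
      ((((((hDfd ζ).hasDerivAt.const_mul 3).mul (hg2d ζ).hasDerivAt).div
          ((hfd ζ).hasDerivAt.pow 3) (pow_ne_zero _ (hfne ζ))).sub
        (((hDg2d ζ).hasDerivAt.const_mul 2).div ((hfd ζ).hasDerivAt.pow 2)
          (pow_ne_zero _ (hfne ζ)))).mul (hR2d ζ).hasDerivAt)).deriv]
  -- inner derivative of the pdA3-zero composite
  have hin : deriv (fun s => -(g1 s / f s ^ 2 * R1 s) - g2 s / f s ^ 2 * R2 s)
      = fun z => -((deriv g1 z * f z ^ 2 - g1 z * (↑2 * f z ^ 1 * deriv f z)) / (f z ^ 2) ^ 2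
            * R1 z + g1 z / f z ^ 2 * deriv R1 z)
          - ((deriv g2 z * f z ^ 2 - g2 z * (↑2 * f z ^ 1 * deriv f z)) / (f z ^ 2) ^ 2
            * R2 z + g2 z / f z ^ 2 * deriv R2 z) := by
    funext z
    exact ((((((hg1d z).hasDerivAt.div ((hfd z).hasDerivAt.pow 2)
        (pow_ne_zero _ (hfne z))).mul (hR1d z).hasDerivAt)).neg).sub
      ((((hg2d z).hasDerivAt.div ((hfd z).hasDerivAt.pow 2)
        (pow_ne_zero _ (hfne z))).mul (hR2d z).hasDerivAt))).deriv
  rw [hin]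
  have c1 := (((hDg1d ζ).hasDerivAt.mul ((hfd ζ).hasDerivAt.pow 2)).sub
      ((hg1d ζ).hasDerivAt.mul ((((hfd ζ).hasDerivAt.pow 1).const_mul
        (2:ℝ)).mul (hDfd ζ).hasDerivAt))).div
      (((hfd ζ).hasDerivAt.pow 2).pow 2) (pow_ne_zero _ (pow_ne_zero _ (hfne ζ)))
  have c2 := (((hDg2d ζ).hasDerivAt.mul ((hfd ζ).hasDerivAt.pow 2)).sub
      ((hg2d ζ).hasDerivAt.mul ((((hfd ζ).hasDerivAt.pow 1).const_mul
        (2:ℝ)).mul (hDfd ζ).hasDerivAt))).div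
      (((hfd ζ).hasDerivAt.pow 2).pow 2) (pow_ne_zero _ (pow_ne_zero _ (hfne ζ)))
  have e1 := (c1.mul (hR1d ζ).hasDerivAt).add
      (((hg1d ζ).hasDerivAt.div ((hfd ζ).hasDerivAt.pow 2)
        (pow_ne_zero _ (hfne ζ))).mul (hDR1d ζ).hasDerivAt)
  have e2 := (c2.mul (hR2d ζ).hasDerivAt).add
      (((hg2d ζ).hasDerivAt.div ((hfd ζ).hasDerivAt.pow 2)
        (pow_ne_zero _ (hfne ζ))).mul (hDR2d ζ).hasDerivAt)
  erw [(e1.neg.sub e2).deriv]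
  rw [hdl ζ]
  erw [((hg1d ζ).hasDerivAt.div (hfd ζ).hasDerivAt (hfne ζ)).deriv]
  erw [((hg2d ζ).hasDerivAt.div (hfd ζ).hasDerivAt (hfne ζ)).deriv]
  erw [(((hDg1d ζ).hasDerivAt.div ((hfd ζ).hasDerivAt.pow 2)
      (pow_ne_zero _ (hfne ζ))).sub
    (((hDfd ζ).hasDerivAt.mul (hg1d ζ).hasDerivAt).div ((hfd ζ).hasDerivAt.pow 3)
      (pow_ne_zero _ (hfne ζ)))).deriv]
  erw [(((hDg2d ζ).hasDerivAt.div ((hfd ζ).hasDerivAt.pow 2)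
      (pow_ne_zero _ (hfne ζ))).sub
    (((hDfd ζ).hasDerivAt.mul (hg2d ζ).hasDerivAt).div ((hfd ζ).hasDerivAt.pow 3)
      (pow_ne_zero _ (hfne ζ)))).deriv]
  erw [(((hfd ζ).hasDerivAt.inv (hfne ζ)).mul (hDR1d ζ).hasDerivAt).deriv]
  erw [(((hfd ζ).hasDerivAt.inv (hfne ζ)).mul (hDR2d ζ).hasDerivAt).deriv]
  simp only [Pi.add_apply, Pi.sub_apply, Pi.mul_apply, Pi.div_apply, Pi.pow_apply,
    Pi.inv_apply, Pi.neg_apply]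
  have h0 := hfne ζ
  field_simp
  ring

end Endgame2
/-- homogenization of a third-order parametric variational problem.
For a smooth curve X with (X⁰)′ > 0 and y = (X¹, X²) ∘ (X⁰)⁻¹ (the inverse of X⁰
being realized by the smooth left inverse τ), one has
𝓔_a(X) = (X⁰)′ · E_a(y) ∘ X⁰ for a = 1, 2, and
𝓔₀(X) = −(X¹)′ · E₁(y) ∘ X⁰ − (X²)′ · E₂(y) ∘ X⁰. -/
theorem homogenization_of_parametric_variational_problem
    (L : ℝ × (Fin 2 → ℝ) × (Fin 2 → ℝ) × (Fin 2 → ℝ) → ℝ) (hL : ContDiff ℝ (⊤ : ℕ∞) L)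
    (X : ℝ → Fin 3 → ℝ) (hX : ContDiff ℝ (⊤ : ℕ∞) X)
    (hX0 : ∀ ζ : ℝ, 0 < deriv (fun t => X t 0) ζ)
    (τ : ℝ → ℝ) (hτ : ContDiff ℝ (⊤ : ℕ∞) τ) (hinv : ∀ ζ : ℝ, τ (X ζ 0) = ζ) :
    ∀ ζ : ℝ,
      (∀ a : Fin 2,
        EP3 (homog L) X a.succ ζ
          = deriv (fun t => X t 0) ζ
            * EP2 L (fun s => ![X (τ s) 1, X (τ s) 2]) a (X ζ 0)) ∧
      EP3 (homog L) X 0 ζ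
        = -(deriv (fun t => X t 1) ζ
              * EP2 L (fun s => ![X (τ s) 1, X (τ s) 2]) 0 (X ζ 0))
          - deriv (fun t => X t 2) ζ
              * EP2 L (fun s => ![X (τ s) 1, X (τ s) 2]) 1 (X ζ 0) := by
  have hL' : ContDiff ℝ ∞ L := hL.of_le (by simp)
  have hX' : ContDiff ℝ ∞ X := hX.of_le (by simp)
  have hτ' : ContDiff ℝ ∞ τ := hτ.of_le (by simp)
  have hLd : Differentiable ℝ L := hL'.differentiable one_le_inf
  have h1pos : ∀ z, d1 X 0 z ≠ 0 := fun z => ne_of_gt (hX0 z)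
  have hFcsm : ContDiff ℝ ∞ (Fc X) := Fc_contDiff hX' h1pos
  have hQ0 : ContDiff ℝ ∞ (fun z => pdV2 L 0 (Fc X z)) := (pdV2_contDiff hL' 0).comp hFcsm
  have hQ1 : ContDiff ℝ ∞ (fun z => pdV2 L 1 (Fc X z)) := (pdV2_contDiff hL' 1).comp hFcsm
  have hR0 : ContDiff ℝ ∞ (fun z => pdA2 L 0 (Fc X z)) := (pdA2_contDiff hL' 0).comp hFcsm
  have hR1 : ContDiff ℝ ∞ (fun z => pdA2 L 1 (Fc X z)) := (pdA2_contDiff hL' 1).comp hFcsm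
  have hlamsm : ContDiff ℝ ∞ (fun z => L (Fc X z)) := hL'.comp hFcsm
  intro ζ
  constructor
  · intro a
    fin_cases a
    · show EP3 (homog L) X 1 ζ
          = deriv (fun t => X t 0) ζ * EP2 L (fun s => ![X (τ s) 1, X (τ s) 2]) 0 (X ζ 0)
      rw [EP3]
      rw [pdX3_one hLd hX' ζ]
      have hU : (fun s => pdU3 (homog L) 1 (X s, deriv X s, deriv (deriv X) s))
          = fun s => pdV2 L 0 (Fc X s)
              - deriv (d1 X 0) s / d1 X 0 s ^ 2 * pdA2 L 0 (Fc X s) :=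
        funext fun s => pdU3_one hLd hX' s (h1pos s)
      have hA : (fun s => pdA3 (homog L) 1 (X s, deriv X s, deriv (deriv X) s))
          = fun s => pdA2 L 0 (Fc X s) / d1 X 0 s :=
        funext fun s => pdA3_one hLd hX' s (h1pos s)
      rw [hU, hA]
      rw [EP2_eq hL' hX' hτ' hinv h1pos rfl 0 ζ]
      exact endgame1 (d1_contDiff hX' 0) hQ0 hR0 h1pos (pdX2 L 0 (Fc X ζ)) ζ
    · show EP3 (homog L) X 2 ζ
          = deriv (fun t => X t 0) ζ * EP2 L (fun s => ![X (τ s) 1, X (τ s) 2]) 1 (X ζ 0)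
      rw [EP3]
      rw [pdX3_two hLd hX' ζ]
      have hU : (fun s => pdU3 (homog L) 2 (X s, deriv X s, deriv (deriv X) s))
          = fun s => pdV2 L 1 (Fc X s)
              - deriv (d1 X 0) s / d1 X 0 s ^ 2 * pdA2 L 1 (Fc X s) :=
        funext fun s => pdU3_two hLd hX' s (h1pos s)
      have hA : (fun s => pdA3 (homog L) 2 (X s, deriv X s, deriv (deriv X) s))
          = fun s => pdA2 L 1 (Fc X s) / d1 X 0 s :=
        funext fun s => pdA3_two hLd hX' s (h1pos s)
      rw [hU, hA]
      rw [EP2_eq hL' hX' hτ' hinv h1pos rfl 1 ζ]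
      exact endgame1 (d1_contDiff hX' 0) hQ1 hR1 h1pos (pdX2 L 1 (Fc X ζ)) ζ
  · rw [EP3]
    rw [pdX3_zero hLd hX' ζ]
    have hU : (fun s => pdU3 (homog L) 0 (X s, deriv X s, deriv (deriv X) s))
        = fun s => L (Fc X s)
            - d1 X 1 s / d1 X 0 s * pdV2 L 0 (Fc X s)
            - d1 X 2 s / d1 X 0 s * pdV2 L 1 (Fc X s)
            + (3 * deriv (d1 X 0) s * d1 X 1 s / d1 X 0 s ^ 3
                - 2 * deriv (d1 X 1) s / d1 X 0 s ^ 2) * pdA2 L 0 (Fc X s)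
            + (3 * deriv (d1 X 0) s * d1 X 2 s / d1 X 0 s ^ 3
                - 2 * deriv (d1 X 2) s / d1 X 0 s ^ 2) * pdA2 L 1 (Fc X s) :=
      funext fun s => pdU3_zero hLd hX' s (h1pos s)
    have hA : (fun s => pdA3 (homog L) 0 (X s, deriv X s, deriv (deriv X) s))
        = fun s => -(d1 X 1 s / d1 X 0 s ^ 2 * pdA2 L 0 (Fc X s))
            - d1 X 2 s / d1 X 0 s ^ 2 * pdA2 L 1 (Fc X s) :=
      funext fun s => pdA3_zero hLd hX' s (h1pos s)
    rw [hU, hA]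
    rw [EP2_eq hL' hX' hτ' hinv h1pos rfl 0 ζ, EP2_eq hL' hX' hτ' hinv h1pos rfl 1 ζ]
    have hdl : ∀ z, deriv (fun z => L (Fc X z)) z
        = d1 X 0 z * pdT2 L (Fc X z)
          + d1 X 1 z * pdX2 L 0 (Fc X z) + d1 X 2 z * pdX2 L 1 (Fc X z)
          + deriv (fun u => d1 X 1 u / d1 X 0 u) z * pdV2 L 0 (Fc X z)
          + deriv (fun u => d1 X 2 u / d1 X 0 u) z * pdV2 L 1 (Fc X z)
          + deriv (fun u => deriv (d1 X 1) u / d1 X 0 u ^ 2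
              - deriv (d1 X 0) u * d1 X 1 u / d1 X 0 u ^ 3) z * pdA2 L 0 (Fc X z)
          + deriv (fun u => deriv (d1 X 2) u / d1 X 0 u ^ 2
              - deriv (d1 X 0) u * d1 X 2 u / d1 X 0 u ^ 3) z * pdA2 L 1 (Fc X z) :=
      fun z => lam_deriv hL' hX' h1pos z
    exact endgame2 (d1_contDiff hX' 0) (d1_contDiff hX' 1) (d1_contDiff hX' 2)
      hQ0 hQ1 hR0 hR1 hlamsm h1pos hdl ζ
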